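/- arXiv:1104.3090 — 2 statements merged into one kernel-verified Lean document; each statement's English description precedes it below -/
import Mathlib

section
/- Let G be a connected simple graph, let s,t be vertices of G, and let v be a cut vertex of G whose removal yields connected components C_1, …, C_l with l > 1. For each i, let G_i be the subgraph of G induced by C_i ∪ {v}, let s_i = s if s ∈ C_i and s_i = v otherwise, and let t_i = t if t ∈ C_i and t_i = v otherwise. Then OLP(G,s,t) ≥ Σ_{i=1}^{l} OLP(G_i, s_i, t_i). -/
/-!
A feasible point `x` for `(G, s, t)` restricts to a feasible point for every `(G_i, s_i, t_i)`.
Let `r` be the retraction of `V` onto `V(G_i)` that sends every vertex outside `G_i` to `v`;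
then `s_i = r s` and `t_i = r t`. A cut `S` of `G_i` pulls back to the cut `r⁻¹ S` of `G`, and
since `G_i` meets the rest of `G` only in `v`, every edge leaving `V(G_i)` is collapsed by `r`,
so both cuts are crossed by the same edges. The edge sets of the `G_i` partition `E(G)`, hence
the restricted values add up to the value of `x`.
-/

open SimpleGraph

/-- The value `Σ_{e ∈ E} x e` of an assignment `x` on the edges of `G`. -/
noncomputable def hkValue {V : Type*} (G : SimpleGraph V) (x : Sym2 V → ℝ) : ℝ :=
  ∑ᶠ e ∈ G.edgeSet, x e

/-- The total weight `Σ_{e ∈ δ(S)} x e` of the edges of `G` crossing the cut `(S, Sᶜ)`. -/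
noncomputable def hkCut {V : Type*} (G : SimpleGraph V) (x : Sym2 V → ℝ)
    (S : Set V) : ℝ :=
  ∑ᶠ e ∈ {e ∈ G.edgeSet | ∃ a b, e = s(a, b) ∧ a ∈ S ∧ b ∉ S}, x e

/-- Feasibility for the Held-Karp path relaxation of graph-TSPP on `(G, s, t)`. -/
def HKPathFeasible {V : Type*} (G : SimpleGraph V) (s t : V) (x : Sym2 V → ℝ) : Prop :=
  (∀ e, 0 ≤ x e) ∧
  ∀ S : Set V, S.Nonempty → S ≠ Set.univ →
    ((s ∈ S ↔ t ∈ S) → 2 ≤ hkCut G x S) ∧ (¬(s ∈ S ↔ t ∈ S) → 1 ≤ hkCut G x S)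

/-- The optimum value `OLP(G, s, t)` of the Held-Karp path relaxation on `(G, s, t)`. -/
noncomputable def OLPpath {V : Type*} [Fintype V] (G : SimpleGraph V) (s t : V) : ℝ :=
  sInf {y | ∃ x, HKPathFeasible G s t x ∧ y = hkValue G x}

section

variable {V : Type*} {G : SimpleGraph V}

namespace SimpleGraph

lemma image_edgeSet_induce (G : SimpleGraph V) (W : Set V) :
    Sym2.map (↑) '' (G.induce W).edgeSet = G.edgeSet ∩ W.sym2 := by
  ext ⟨a, b⟩
  constructor
  · rintro ⟨⟨⟨a', ha⟩, ⟨b', hb⟩⟩, hab, he⟩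
    rw [Sym2.map_mk] at he
    rcases Sym2.eq_iff.1 he with ⟨rfl, rfl⟩ | ⟨rfl, rfl⟩
    · exact ⟨hab, ha, hb⟩
    · exact ⟨hab.symm, hb, ha⟩
  · rintro ⟨hab, ha, hb⟩
    exact ⟨s(⟨a, ha⟩, ⟨b, hb⟩), hab, rfl⟩

def IsAttachedAt (G : SimpleGraph V) (W : Set V) (v : V) : Prop :=
  ∀ ⦃a b⦄, G.Adj a b → a ∉ W → b ∈ W → b = v

end SimpleGraph

section Retraction

variable {W : Set V}

open Classical in
noncomputable def retractOnto (v : W) (u : V) : W :=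
  if h : u ∈ W then ⟨u, h⟩ else v

lemma retractOnto_of_mem (v : W) {u : V} (h : u ∈ W) : retractOnto v u = ⟨u, h⟩ :=
  dif_pos h

lemma retractOnto_of_notMem (v : W) {u : V} (h : u ∉ W) : retractOnto v u = v :=
  dif_neg h

lemma retractOnto_surjective (v : W) : Function.Surjective (retractOnto v) :=
  fun w => ⟨w, retractOnto_of_mem v w.2⟩

lemma retractOnto_eq_of_adj {v : W} (hW : G.IsAttachedAt W v) {a b : V} (hab : G.Adj a b)
    (ha : a ∉ W) : retractOnto v a = retractOnto v b := by
  rw [retractOnto_of_notMem v ha]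
  by_cases hb : b ∈ W
  · rw [retractOnto_of_mem v hb]
    exact Subtype.ext (hW hab ha hb).symm
  · rw [retractOnto_of_notMem v hb]

lemma mem_of_adj_of_retractOnto_ne {v : W} (hW : G.IsAttachedAt W v) {a b : V}
    (hab : G.Adj a b) (hne : retractOnto v a ≠ retractOnto v b) : a ∈ W ∧ b ∈ W :=
  ⟨of_not_not fun ha => hne (retractOnto_eq_of_adj hW hab ha),
    of_not_not fun hb => hne (retractOnto_eq_of_adj hW hab.symm hb).symm⟩

end Retraction

section HeldKarp

variable {W : Set V} {s t : V} {x : Sym2 V → ℝ}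

lemma hkCut_induce {v : W} (hW : G.IsAttachedAt W v) (S : Set W) :
    hkCut (G.induce W) (x ∘ Sym2.map (↑)) S = hkCut G x (retractOnto v ⁻¹' S) := by
  have hcross :
      Sym2.map (↑) '' {e ∈ (G.induce W).edgeSet | ∃ a b, e = s(a, b) ∧ a ∈ S ∧ b ∉ S}
      = {e ∈ G.edgeSet | ∃ a b, e = s(a, b) ∧
          a ∈ retractOnto v ⁻¹' S ∧ b ∉ retractOnto v ⁻¹' S} := by
    ext e
    constructor
    · rintro ⟨_, ⟨hab, a, b, rfl, ha, hb⟩, rfl⟩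
      refine ⟨hab, a, b, rfl, ?_, ?_⟩ <;>
        simpa only [Set.mem_preimage, retractOnto_of_mem v (Subtype.prop _)]
    · rintro ⟨hab, a, b, rfl, ha, hb⟩
      obtain ⟨haW, hbW⟩ :=
        mem_of_adj_of_retractOnto_ne hW hab fun h => hb (by rwa [Set.mem_preimage, ← h])
      rw [Set.mem_preimage, retractOnto_of_mem v haW] at ha
      rw [Set.mem_preimage, retractOnto_of_mem v hbW] at hb
      exact ⟨s(⟨a, haW⟩, ⟨b, hbW⟩), ⟨hab, _, _, rfl, ha, hb⟩, rfl⟩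
  rw [hkCut, hkCut, ← hcross, finsum_mem_image (Sym2.map.injective Subtype.val_injective).injOn]
  rfl

lemma HKPathFeasible.induce {v : W} (hW : G.IsAttachedAt W v) (hx : HKPathFeasible G s t x) :
    HKPathFeasible (G.induce W) (retractOnto v s) (retractOnto v t) (x ∘ Sym2.map (↑)) := by
  refine ⟨fun e => hx.1 _, fun S hS hSu => ?_⟩
  have hr := retractOnto_surjective v
  rw [hkCut_induce hW]
  exact hx.2 _ (hr.nonempty_preimage.2 hS)
    fun h => hSu (hr.preimage_injective (h.trans Set.preimage_univ.symm))

lemma hkValue_induce (G : SimpleGraph V) (W : Set V) (x : Sym2 V → ℝ) :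
    hkValue (G.induce W) (x ∘ Sym2.map (↑)) = ∑ᶠ e ∈ G.edgeSet ∩ W.sym2, x e := by
  rw [hkValue, ← image_edgeSet_induce,
    finsum_mem_image (Sym2.map.injective Subtype.val_injective).injOn]
  rfl

lemma hkValue_eq_sum_induce [Finite V] {ι : Type*} [Fintype ι] (W : ι → Set V)
    (hdisj : Pairwise fun i j => (W i ∩ W j).Subsingleton)
    (hcover : ∀ ⦃a b⦄, G.Adj a b → ∃ i, a ∈ W i ∧ b ∈ W i) (x : Sym2 V → ℝ) :
    hkValue G x = ∑ i, hkValue (G.induce (W i)) (x ∘ Sym2.map (↑)) := by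
  have hunion : G.edgeSet = ⋃ i, G.edgeSet ∩ (W i).sym2 := by
    rw [← Set.inter_iUnion, eq_comm, Set.inter_eq_left]
    rintro ⟨a, b⟩ hab
    obtain ⟨i, ha, hb⟩ := hcover hab
    exact Set.mem_iUnion.2 ⟨i, ha, hb⟩
  have hpairwise :
      Pairwise fun i j => Disjoint (G.edgeSet ∩ (W i).sym2) (G.edgeSet ∩ (W j).sym2) := by
    intro i j hij
    rw [Set.disjoint_left]
    rintro ⟨a, b⟩ ⟨hab, ha, hb⟩ ⟨-, ha', hb'⟩
    exact hab.ne (hdisj hij ⟨ha, ha'⟩ ⟨hb, hb'⟩)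
  rw [hkValue, hunion, finsum_mem_iUnion hpairwise fun i => Set.toFinite _,
    finsum_eq_sum_of_fintype]
  simp only [hkValue_induce]

lemma two_le_hkCut_two [Finite V] (hconn : G.Connected) {S : Set V} (hS : S.Nonempty)
    (hSu : S ≠ Set.univ) : 2 ≤ hkCut G (fun _ => 2) S := by
  obtain ⟨a, ha⟩ := hS
  obtain ⟨c, hc⟩ := (Set.ne_univ_iff_exists_notMem S).1 hSu
  obtain ⟨d, -, hd, hd'⟩ := (hconn.preconnected a c).some.exists_boundary_dart S ha hc
  rw [hkCut, finsum_mem_eq_finite_toFinset_sum _ (Set.toFinite _)]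
  exact Finset.single_le_sum (f := fun _ => (2 : ℝ)) (fun _ _ => zero_le_two)
    ((Set.Finite.mem_toFinset _).2 ⟨d.adj, d.fst, d.snd, rfl, hd, hd'⟩)

lemma hkPathFeasible_two [Finite V] (hconn : G.Connected) (s t : V) :
    HKPathFeasible G s t fun _ => 2 :=
  ⟨fun _ => zero_le_two, fun _ hS hSu =>
    ⟨fun _ => two_le_hkCut_two hconn hS hSu,
      fun _ => one_le_two.trans (two_le_hkCut_two hconn hS hSu)⟩⟩

variable [Fintype V]

lemma OLPpath_le_hkValue (hx : HKPathFeasible G s t x) : OLPpath G s t ≤ hkValue G x :=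
  csInf_le ⟨0, fun _ ⟨_, hy, hxy⟩ => hxy ▸ finsum_nonneg fun e => finsum_nonneg fun _ => hy.1 e⟩
    ⟨x, hx, rfl⟩

/-- Without a feasible point `OLPpath` would be the junk value `sInf ∅ = 0`; connectivity
provides one. -/
lemma le_OLPpath (hconn : G.Connected) {b : ℝ}
    (h : ∀ x, HKPathFeasible G s t x → b ≤ hkValue G x) : b ≤ OLPpath G s t :=
  le_csInf ⟨_, _, hkPathFeasible_two hconn s t, rfl⟩ fun _ ⟨x, hx, hy⟩ => hy ▸ h x hx

end HeldKarp

section CutVertex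

variable [DecidableEq V] {v : V}

lemma eq_retractOnto_insert {D : Finset V} {u : V} {w : ((insert v D : Finset V) : Set V)}
    (hw : (w : V) = if u ∈ D then u else v) : w = retractOnto ⟨v, D.mem_insert_self v⟩ u := by
  refine Subtype.ext (hw.trans ?_)
  split_ifs with hu
  · rw [retractOnto_of_mem _ (Finset.mem_insert_of_mem hu)]
  · by_cases huv : u = v
    · rw [huv, retractOnto_of_mem _ (D.mem_insert_self v)]
    · rw [retractOnto_of_notMem _ (by simp [hu, huv])]

lemma insert_inter_insert_subsingleton {D E : Finset V} (h : Disjoint D E) :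
    (((insert v D : Finset V) : Set V) ∩ (insert v E : Finset V)).Subsingleton := by
  rw [← Finset.coe_inter, ← Finset.insert_inter_distrib, Finset.disjoint_iff_inter_eq_empty.1 h]
  simp

variable {ι : Type*} {C : ι → Finset V} (hcover : ∀ u : V, u ≠ v ↔ ∃ i, u ∈ C i)
  (hsep : ∀ i j, i ≠ j → ∀ a ∈ C i, ∀ b ∈ C j, ¬ G.Adj a b)
include hcover hsep

lemma isAttachedAt_insert (i : ι) : G.IsAttachedAt (insert v (C i) : Finset V) v := by
  intro a b hab ha hb
  rcases Finset.mem_insert.1 hb with rfl | hbC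
  · rfl
  obtain ⟨j, haC⟩ := (hcover a).1 fun hav => ha (hav ▸ Finset.mem_insert_self _ _)
  have hji : j ≠ i := by rintro rfl; exact ha (Finset.mem_insert_of_mem haC)
  exact absurd hab (hsep j i hji a haC b hbC)

lemma exists_mem_insert_of_adj ⦃a b : V⦄ (hab : G.Adj a b) :
    ∃ i, a ∈ insert v (C i) ∧ b ∈ insert v (C i) := by
  wlog hav : a ≠ v generalizing a b
  · obtain ⟨i, hb, ha⟩ := this hab.symm fun hbv => hab.ne ((not_not.1 hav).trans hbv.symm)
    exact ⟨i, ha, hb⟩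
  obtain ⟨i, haC⟩ := (hcover a).1 hav
  have ha : a ∈ insert v (C i) := Finset.mem_insert_of_mem haC
  by_contra! h
  exact hav (isAttachedAt_insert hcover hsep i hab.symm (h i ha) ha)

end CutVertex

end

theorem heldKarpPath_superadditive_at_cut_vertex_general
    {V : Type*} [Fintype V] [DecidableEq V]
    (G : SimpleGraph V)
    (hconn : G.Connected)
    (s t v : V)
    (l : ℕ) (C : Fin l → Finset V)
    (hdisj : ∀ i j, i ≠ j → Disjoint (C i) (C j))
    (hcover : ∀ u : V, u ≠ v ↔ ∃ i, u ∈ C i)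
    (hsep : ∀ i j, i ≠ j → ∀ a ∈ C i, ∀ b ∈ C j, ¬ G.Adj a b)
    (si ti : (i : Fin l) → ((insert v (C i) : Finset V) : Set V))
    (hsi : ∀ i, (si i : V) = if s ∈ C i then s else v)
    (hti : ∀ i, (ti i : V) = if t ∈ C i then t else v) :
    ∑ i, OLPpath (G.induce ((insert v (C i) : Finset V) : Set V)) (si i) (ti i)
      ≤ OLPpath G s t := by
  refine le_OLPpath hconn fun x hx => ?_
  calc ∑ i, OLPpath (G.induce ((insert v (C i) : Finset V) : Set V)) (si i) (ti i)
      ≤ ∑ i, hkValue (G.induce ((insert v (C i) : Finset V) : Set V)) (x ∘ Sym2.map (↑)) := by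
        gcongr with i
        rw [eq_retractOnto_insert (hsi i), eq_retractOnto_insert (hti i)]
        exact OLPpath_le_hkValue (hx.induce (isAttachedAt_insert hcover hsep i))
    _ = hkValue G x := (hkValue_eq_sum_induce _
          (fun i j hij => insert_inter_insert_subsingleton (hdisj i j hij))
          (exists_mem_insert_of_adj hcover hsep) x).symm

/-- Let `G` be connected, `v` a cut vertex whose removal yields the
connected components `C 0, …, C (l-1)` (`l > 1`), let `G_i` be the subgraph induced
by `C i ∪ {v}`, and let `s_i`/`t_i` be `s`/`t` if they lie in `C i` and `v`
otherwise. Then `OLP(G,s,t) ≥ Σ_i OLP(G_i, s_i, t_i)`. -/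
theorem heldKarpPath_superadditive_at_cut_vertex
    {V : Type*} [Fintype V] [DecidableEq V]
    (G : SimpleGraph V)
    (hconn : G.Connected)
    (s t v : V)
    (l : ℕ) (hl : 1 < l) (C : Fin l → Finset V)
    (hdisj : ∀ i j, i ≠ j → Disjoint (C i) (C j))
    (hcover : ∀ u : V, u ≠ v ↔ ∃ i, u ∈ C i)
    (hcomp : ∀ i, (G.induce ((C i : Finset V) : Set V)).Connected)
    (hsep : ∀ i j, i ≠ j → ∀ a ∈ C i, ∀ b ∈ C j, ¬ G.Adj a b)
    (si ti : (i : Fin l) → ((insert v (C i) : Finset V) : Set V))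
    (hsi : ∀ i, (si i : V) = if s ∈ C i then s else v)
    (hti : ∀ i, (ti i : V) = if t ∈ C i then t else v) :
    ∑ i, OLPpath (G.induce ((insert v (C i) : Finset V) : Set V)) (si i) (ti i)
      ≤ OLPpath G s t :=
  heldKarpPath_superadditive_at_cut_vertex_general G hconn s t v l C hdisj hcover hsep si ti hsi hti
end

section
/- Let G be a connected simple graph on n ≥ 3 vertices such that for every vertex v the subgraph induced on the remaining vertices is connected. Then for all vertices s,t of G, the graph distance satisfies dist_G(s,t) ≤ n/2. -/
/-!
Let `d = dist s t`. For `0 < i < d`, a walk from `s` to `t` meets the distance level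
`{x | dist s x = i}` at some vertex `x`, because `dist s ·` changes by at most one per edge.
As `x ≠ s, t`, deleting `x` leaves another walk from `s` to `t`, which meets the same level at a
vertex other than `x`. So the `d - 1` middle levels have two vertices each, and with `s` and `t`
this gives `2 d ≤ n`.
-/

open Finset

namespace SimpleGraph

variable {V : Type*} {G : SimpleGraph V}

lemma Adj.dist_le_dist_add_one {u v : V} (h : G.Adj u v) (s : V) :
    G.dist s v ≤ G.dist s u + 1 := by
  rcases h.diff_dist_adj (u := s) with h | h | h <;> omega

lemma Walk.exists_mem_support_dist_eq {s u t : V} (w : G.Walk u t) {i : ℕ}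
    (hu : G.dist s u ≤ i) (ht : i ≤ G.dist s t) : ∃ x ∈ w.support, G.dist s x = i := by
  induction w with
  | nil => exact ⟨_, List.mem_singleton_self _, le_antisymm hu ht⟩
  | @cons u v t huv p ih =>
    obtain hi | hi := hu.eq_or_lt
    · exact ⟨u, p.support.mem_cons_self, hi⟩
    · obtain ⟨x, hx, hxi⟩ := ih ((huv.dist_le_dist_add_one s).trans hi) ht
      exact ⟨x, List.mem_cons_of_mem _ hx, hxi⟩

lemma exists_walk_not_mem_support {v s t : V} (h : (G.induce {u | u ≠ v}).Preconnected)
    (hs : s ≠ v) (ht : t ≠ v) : ∃ w : G.Walk s t, v ∉ w.support := by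
  obtain ⟨w⟩ := h ⟨s, hs⟩ ⟨t, ht⟩
  refine ⟨w.map (Embedding.induce _).toHom, fun hv => ?_⟩
  obtain ⟨⟨x, hx⟩, -, hxv⟩ := List.mem_map.mp (Walk.support_map _ _ ▸ hv)
  exact hx hxv

variable [Fintype V]

lemma one_lt_card_filter_dist_eq (h : ∀ v, (G.induce {u | u ≠ v}).Preconnected)
    {s t : V} {i : ℕ} (hi₀ : 0 < i) (hi : i < G.dist s t) :
    1 < #{x | G.dist s x = i} := by
  obtain ⟨w, -⟩ := exists_walk_of_dist_ne_zero (by omega : G.dist s t ≠ 0)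
  obtain ⟨x, -, hx⟩ := w.exists_mem_support_dist_eq (by simp) hi.le
  have hxs : s ≠ x := by rintro rfl; rw [dist_self] at hx; omega
  have hxt : t ≠ x := by rintro rfl; omega
  obtain ⟨w', hw'⟩ := exists_walk_not_mem_support (h x) hxs hxt
  obtain ⟨y, hy, hyi⟩ := w'.exists_mem_support_dist_eq (by simp) hi.le
  exact one_lt_card.mpr ⟨x, by simpa, y, by simpa, fun hxy => hw' (hxy ▸ hy)⟩

theorem two_mul_dist_le_card (h : ∀ v, (G.induce {u | u ≠ v}).Preconnected) (s t : V) :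
    2 * G.dist s t ≤ Fintype.card V := by
  obtain hd | hd := eq_or_ne (G.dist s t) 0
  · simp [hd]
  obtain ⟨m, hm⟩ := Nat.exists_eq_add_one_of_ne_zero hd
  set level : ℕ → ℕ := fun i => #{x | G.dist s x = i}
  have hlevels : ∑ i ∈ range (m + 2), level i ≤ Fintype.card V := by
    rw [sum_card_fiberwise_eq_card_filter]
    exact card_filter_le _ _
  have hmid : ∑ i ∈ range m, 2 ≤ ∑ i ∈ range m, level (i + 1) :=
    sum_le_sum fun i hi => one_lt_card_filter_dist_eq h (t := t) i.succ_pos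
      (by rw [mem_range] at hi; omega)
  have hs : 0 < level 0 := card_pos.mpr ⟨s, by simp⟩
  have ht : 0 < level (m + 1) := card_pos.mpr ⟨t, by simp [hm]⟩
  rw [sum_range_succ, sum_range_succ'] at hlevels
  simp only [sum_const, card_range, smul_eq_mul] at hmid
  omega

end SimpleGraph

open SimpleGraph

theorem dist_le_half_card_of_two_connected_general
    {V : Type*} [Fintype V]
    (G : SimpleGraph V)
    (h2vc : ∀ v : V, (G.induce {u : V | u ≠ v}).Connected)
    (s t : V) :
    (G.dist s t : ℝ) ≤ Fintype.card V / 2 := by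
  have h := two_mul_dist_le_card (fun v => (h2vc v).preconnected) s t
  rw [le_div_iff₀ two_pos, mul_comm]
  exact_mod_cast h

/-- In a 2-vertex-connected simple graph on `n ≥ 3` vertices, any
two vertices are at graph distance at most `n/2`. -/
theorem dist_le_half_card_of_two_connected
    {V : Type*} [Fintype V]
    (G : SimpleGraph V)
    (hn : 3 ≤ Fintype.card V)
    (hconn : G.Connected)
    (h2vc : ∀ v : V, (G.induce {u : V | u ≠ v}).Connected)
    (s t : V) :
    (G.dist s t : ℝ) ≤ Fintype.card V / 2 :=
  dist_le_half_card_of_two_connected_general G h2vc s t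
end
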